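/- arXiv:1705.10145 — 2 statements merged into one kernel-verified Lean document; each statement's English description precedes it below -/
import Mathlib

section
/- For any linear relation (V,C), the first projection C|_{C^♯} → C^♯/C^♭ (sending (x,y) ∈ C with x,y ∈ C^♯ to the coset of x) is surjective with kernel C|_{C^♭}; likewise for the second projection. Consequently the induced relation on C^♯/C^♭ is automorphic. -/
variable {K : Type*} [Field K]

section Defs
variable {V : Type*} [AddCommGroup V] [Module K V]

/-- A ℤ-indexed chain through the relation `C`. -/
def IsCChain (C : Submodule K (V × V)) (f : ℤ → V) : Prop :=
  ∀ n : ℤ, (f n, f (n + 1)) ∈ C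

/-- `C^♯`: elements lying on a bi-infinite chain. -/
def csharp (C : Submodule K (V × V)) : Set V :=
  {v | ∃ f : ℤ → V, IsCChain C f ∧ f 0 = v}

/-- `C₊`: elements lying on a bi-infinite chain which is eventually zero to the right. -/
def cplus (C : Submodule K (V × V)) : Set V :=
  {v | ∃ f : ℤ → V, IsCChain C f ∧ f 0 = v ∧ ∃ N : ℤ, ∀ n ≥ N, f n = 0}

/-- `C₋`: elements lying on a bi-infinite chain which is eventually zero to the left. -/
def cminus (C : Submodule K (V × V)) : Set V :=
  {v | ∃ f : ℤ → V, IsCChain C f ∧ f 0 = v ∧ ∃ N : ℤ, ∀ n ≤ N, f n = 0}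

/-- `C^♭ = C₊ + C₋`. -/
def cflat (C : Submodule K (V × V)) : Set V :=
  {v | ∃ a ∈ cplus C, ∃ b ∈ cminus C, v = a + b}

end Defs

/-!
The heart is Crawley-Boevey's Lemma 4.4: if `(x, y) ∈ C` with `x ∈ C^♭` and `y ∈ C^♯`, write
`x = a + b` with `a ∈ C₊`, `b ∈ C₋`. Then `y` is the sum of the successor of `a` on its chain,
which lies in `C₊`, and of the remainder, whose chain to the right is the difference of those of
`y` and of `a`, and whose chain to the left is that of `b`; so the remainder lies in `C₋`.
Surjectivity holds because each element of `C^♯` has a successor and a predecessor in `C^♯`.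
The statements about the second projection are those about the first for the inverse relation,
whose chains are the reversed chains of `C`: reversal fixes `C^♯` and `C^♭` and exchanges `C₊`
and `C₋`.
-/

namespace IsCChain

variable {V : Type*} [AddCommGroup V] [Module K V] {C : Submodule K (V × V)} {f g : ℤ → V}

lemma shift (hf : IsCChain C f) (k : ℤ) : IsCChain C (fun n => f (n + k)) := fun n => by
  simpa only [add_right_comm n k 1] using hf (n + k)

lemma sub (hf : IsCChain C f) (hg : IsCChain C g) : IsCChain C (f - g) := fun n =>
  C.sub_mem (hf n) (hg n)

lemma add (hf : IsCChain C f) (hg : IsCChain C g) : IsCChain C (f + g) := fun n =>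
  C.add_mem (hf n) (hg n)

lemma splice (hf : IsCChain C f) (hg : IsCChain C g) (k : ℤ) (hk : (f k, g (k + 1)) ∈ C) :
    IsCChain C (fun n => if n ≤ k then f n else g n) := by
  intro n
  dsimp only
  split_ifs
  · exact hf n
  · obtain rfl : n = k := by omega
    exact hk
  · omega
  · exact hg n

end IsCChain

section Flat

variable {V : Type*} [AddCommGroup V] [Module K V] {C : Submodule K (V × V)}

lemma zero_mem_cflat : (0 : V) ∈ cflat C :=
  ⟨0, ⟨0, fun _ => C.zero_mem, rfl, 0, fun _ _ => rfl⟩,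
    0, ⟨0, fun _ => C.zero_mem, rfl, 0, fun _ _ => rfl⟩, (add_zero 0).symm⟩

lemma cflat_subset_csharp : cflat C ⊆ csharp C := by
  rintro _ ⟨_, ⟨f, hf, rfl, -⟩, _, ⟨g, hg, rfl, -⟩, rfl⟩
  exact ⟨f + g, hf.add hg, rfl⟩

lemma exists_snd_mem_csharp {v : V} (hv : v ∈ csharp C) : ∃ w ∈ csharp C, (v, w) ∈ C := by
  obtain ⟨f, hf, rfl⟩ := hv
  exact ⟨f 1, ⟨_, hf.shift 1, by rw [zero_add]⟩, hf 0⟩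

lemma snd_mem_cflat_of_fst_mem_cflat {p : V × V} (hp : p ∈ C) (h1 : p.1 ∈ cflat C)
    (h2 : p.2 ∈ csharp C) : p.2 ∈ cflat C := by
  obtain ⟨f, hf, hf0⟩ := h2
  obtain ⟨_, ⟨g, hg, rfl, N, hN⟩, _, ⟨h, hh, rfl, M, hM⟩, hp1⟩ := h1
  refine ⟨g 1, ⟨_, hg.shift 1, by rw [zero_add], N, fun n hn => hN _ (by omega)⟩,
    p.2 - g 1, ?_, by abel⟩
  have hjoin : (h (-1 + 1), (f - fun n => g (n + 1)) (-1 + 1)) ∈ C := by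
    have := C.sub_mem hp (hg 0)
    rwa [Prod.mk_sub_mk, hp1, add_sub_cancel_left, ← hf0] at this
  refine ⟨_, (hh.shift 1).splice (hf.sub (hg.shift 1)) (-1) hjoin, by simp [hf0],
    min (M - 1) (-1), fun n hn => ?_⟩
  simp only [if_pos (show n ≤ -1 by omega), hM _ (show n + 1 ≤ M by omega)]

end Flat

section Inverse

variable {V : Type*} [AddCommGroup V] [Module K V]

def relInv (C : Submodule K (V × V)) : Submodule K (V × V) :=
  C.comap (LinearEquiv.prodComm K V V).toLinearMap

variable {C : Submodule K (V × V)}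

@[simp]
lemma mem_relInv {p : V × V} : p ∈ relInv C ↔ (p.2, p.1) ∈ C := Iff.rfl

@[simp]
lemma relInv_relInv : relInv (relInv C) = C := by
  ext
  rfl

lemma IsCChain.reverse {f : ℤ → V} (hf : IsCChain C f) : IsCChain (relInv C) (fun n => f (-n)) :=
  fun n => by
    simpa only [mem_relInv, neg_add_rev, add_comm (-1) (-n), neg_add_cancel_right] using
      hf (-n + -1)

lemma csharp_subset_csharp_relInv : csharp C ⊆ csharp (relInv C) := by
  rintro _ ⟨f, hf, rfl⟩
  exact ⟨_, hf.reverse, by rw [neg_zero]⟩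

lemma cplus_subset_cminus_relInv : cplus C ⊆ cminus (relInv C) := by
  rintro _ ⟨f, hf, rfl, N, hN⟩
  exact ⟨_, hf.reverse, by rw [neg_zero], -N, fun n hn => hN _ (by omega)⟩

lemma cminus_subset_cplus_relInv : cminus C ⊆ cplus (relInv C) := by
  rintro _ ⟨f, hf, rfl, N, hN⟩
  exact ⟨_, hf.reverse, by rw [neg_zero], -N, fun n hn => hN _ (by omega)⟩

@[simp]
lemma csharp_relInv : csharp (relInv C) = csharp C :=
  subset_antisymm (by simpa using csharp_subset_csharp_relInv (C := relInv C))
    csharp_subset_csharp_relInv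

@[simp]
lemma cflat_relInv : cflat (relInv C) = cflat C := by
  have hplus : cplus (relInv C) = cminus C :=
    subset_antisymm (by simpa using cplus_subset_cminus_relInv (C := relInv C))
      cminus_subset_cplus_relInv
  have hminus : cminus (relInv C) = cplus C :=
    subset_antisymm (by simpa using cminus_subset_cplus_relInv (C := relInv C))
      cplus_subset_cminus_relInv
  ext v
  simp only [cflat, hplus, hminus]
  exact ⟨fun ⟨a, ha, b, hb, hv⟩ => ⟨b, hb, a, ha, hv.trans (add_comm a b)⟩,
    fun ⟨a, ha, b, hb, hv⟩ => ⟨b, hb, a, ha, hv.trans (add_comm a b)⟩⟩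

lemma exists_fst_mem_csharp {v : V} (hv : v ∈ csharp C) : ∃ u ∈ csharp C, (u, v) ∈ C := by
  simpa using exists_snd_mem_csharp (C := relInv C) (by simpa using hv)

lemma fst_mem_cflat_of_snd_mem_cflat {p : V × V} (hp : p ∈ C) (h2 : p.2 ∈ cflat C)
    (h1 : p.1 ∈ csharp C) : p.1 ∈ cflat C := by
  simpa using snd_mem_cflat_of_fst_mem_cflat (C := relInv C) (p := p.swap)
    (by simpa using hp) (by simpa using h2) (by simpa using h1)

end Inverse

/-- The first projection `C|_{C^♯} → C^♯/C^♭` is surjective with kernel `C|_{C^♭}`,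
and likewise for the second projection; consequently the induced relation on
`C^♯/C^♭` is automorphic. Surjectivity is expressed by the existence of a pair in
`C|_{C^♯}` whose relevant coordinate is congruent to a given element of `C^♯`
modulo `C^♭`, and the kernel computation as an equality of subsets of `V × V`. -/
theorem quotient_relation_automorphic
    {V : Type*} [AddCommGroup V] [Module K V] (C : Submodule K (V × V)) :
    (∀ v ∈ csharp C, ∃ p : V × V, p ∈ C ∧ p.1 ∈ csharp C ∧ p.2 ∈ csharp C ∧
      p.1 - v ∈ cflat C) ∧
    ({p : V × V | p ∈ C ∧ p.1 ∈ csharp C ∧ p.2 ∈ csharp C ∧ p.1 ∈ cflat C} =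
      {p : V × V | p ∈ C ∧ p.1 ∈ cflat C ∧ p.2 ∈ cflat C}) ∧
    (∀ v ∈ csharp C, ∃ p : V × V, p ∈ C ∧ p.1 ∈ csharp C ∧ p.2 ∈ csharp C ∧
      p.2 - v ∈ cflat C) ∧
    ({p : V × V | p ∈ C ∧ p.1 ∈ csharp C ∧ p.2 ∈ csharp C ∧ p.2 ∈ cflat C} =
      {p : V × V | p ∈ C ∧ p.1 ∈ cflat C ∧ p.2 ∈ cflat C}) := by
  refine ⟨fun v hv => ?_, ?_, fun v hv => ?_, ?_⟩
  · obtain ⟨w, hw, hvw⟩ := exists_snd_mem_csharp hv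
    exact ⟨(v, w), hvw, hv, hw, by simpa using zero_mem_cflat⟩
  · ext p
    exact ⟨fun ⟨hp, _, h2, h1⟩ => ⟨hp, h1, snd_mem_cflat_of_fst_mem_cflat hp h1 h2⟩,
      fun ⟨hp, h1, h2⟩ => ⟨hp, cflat_subset_csharp h1, cflat_subset_csharp h2, h1⟩⟩
  · obtain ⟨u, hu, huv⟩ := exists_fst_mem_csharp hv
    exact ⟨(u, v), huv, hu, hv, by simpa using zero_mem_cflat⟩
  · ext p
    exact ⟨fun ⟨hp, h1, _, h2⟩ => ⟨hp, fst_mem_cflat_of_snd_mem_cflat hp h2 h1, h2⟩,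
      fun ⟨hp, h1, h2⟩ => ⟨hp, cflat_subset_csharp h1, cflat_subset_csharp h2, h2⟩⟩
end

section
/- Let (V,C) be a linear relation with V = C^♯. Then every extension of Kronecker modules 0 → (V,C) → (W,D) → Z₁ → 0 splits, where Z₁ is the Kronecker module with X = K·x, Y = K·y, p(x) = y, q(x) = 0. -/
variable {K : Type*} [Field K]

/-!
A preimage `n₀` of `1` in a short exact sequence `0 → M → N → K → 0` gives the retraction
`n ↦ i⁻¹(n - π n • n₀)`. The two retractions (for `X` and for `Y`) form a morphism of Kronecker
modules as soon as the chosen lifts `x₁ ∈ X` and `p x₁ ∈ Y` of the generators of `Z₁` satisfy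
`q x₁ = 0`. An arbitrary lift `x₀` has `q x₀ = iY w` for some `w ∈ V`; since `w ∈ C^♯` there is
`(v, w) ∈ C`, and `x₁ = x₀ - iX (v, w)` is the required lift.
-/

theorem LinearMap.exists_retraction_of_range_eq_ker {R M N : Type*} [CommRing R]
    [AddCommGroup M] [Module R M] [AddCommGroup N] [Module R N]
    {i : M →ₗ[R] N} {π : N →ₗ[R] R} (hi : Function.Injective i)
    (hex : LinearMap.range i = LinearMap.ker π) {n₀ : N} (hn₀ : π n₀ = 1) :
    ∃ r : N →ₗ[R] M, (∀ m, r (i m) = m) ∧ ∀ n, i (r n) = n - π n • n₀ := by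
  let ρ : N →ₗ[R] N := LinearMap.id - π.smulRight n₀
  have hρ : ∀ n, ρ n ∈ LinearMap.range i := fun n => by simp [ρ, hex, hn₀]
  let r := (LinearEquiv.ofInjective i hi).symm.toLinearMap ∘ₗ ρ.codRestrict _ hρ
  have hir : ∀ n, i (r n) = n - π n • n₀ := fun n => by simp [r, ρ]
  refine ⟨r, fun m => hi ?_, hir⟩
  have hπi : π (i m) = 0 := LinearMap.mem_ker.mp (hex ▸ LinearMap.mem_range_self i m)
  rw [hir, hπi, zero_smul, sub_zero]

theorem exists_mem_of_mem_csharp {V : Type*} [AddCommGroup V] [Module K V]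
    {C : Submodule K (V × V)} {w : V} (hw : w ∈ csharp C) : ∃ v, (v, w) ∈ C := by
  obtain ⟨f, hf, rfl⟩ := hw
  exact ⟨f (-1), by simpa using hf (-1)⟩

theorem ext_Z1_splits_general
    {V : Type*} [AddCommGroup V] [Module K V] (C : Submodule K (V × V))
    (hV : csharp C = Set.univ)
    {X Y : Type*} [AddCommGroup X] [Module K X] [AddCommGroup Y] [Module K Y]
    (p q : X →ₗ[K] Y)
    (iX : ↥C →ₗ[K] X) (iY : V →ₗ[K] Y) (πX : X →ₗ[K] K) (πY : Y →ₗ[K] K)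
    (hiX : Function.Injective iX) (hiY : Function.Injective iY)
    (hπX : Function.Surjective πX)
    (hexX : LinearMap.range iX = LinearMap.ker πX)
    (hexY : LinearMap.range iY = LinearMap.ker πY)
    (hc1 : ∀ c : ↥C, p (iX c) = iY (c : V × V).1)
    (hc2 : ∀ c : ↥C, q (iX c) = iY (c : V × V).2)
    (hc3 : ∀ x : X, πY (p x) = πX x)
    (hc4 : ∀ x : X, πY (q x) = 0) :
    ∃ (sX : X →ₗ[K] ↥C) (sY : Y →ₗ[K] V),
      (∀ c : ↥C, sX (iX c) = c) ∧ (∀ v : V, sY (iY v) = v) ∧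
      (∀ x : X, ((sX x : V × V)).1 = sY (p x)) ∧
      (∀ x : X, ((sX x : V × V)).2 = sY (q x)) := by
  obtain ⟨x₀, hx₀⟩ := hπX 1
  obtain ⟨w, hw⟩ : q x₀ ∈ LinearMap.range iY := hexY ▸ hc4 x₀
  obtain ⟨v, hvw⟩ := exists_mem_of_mem_csharp (hV ▸ Set.mem_univ w)
  set x₁ := x₀ - iX ⟨(v, w), hvw⟩
  have hπx₁ : πX x₁ = 1 := by
    rw [map_sub, hx₀, LinearMap.mem_ker.mp (hexX ▸ LinearMap.mem_range_self iX _), sub_zero]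
  have hqx₁ : q x₁ = 0 := by rw [map_sub, hc2, ← hw, sub_self]
  obtain ⟨sX, hsX, hiX_sX⟩ := LinearMap.exists_retraction_of_range_eq_ker hiX hexX hπx₁
  obtain ⟨sY, hsY, hiY_sY⟩ :=
    LinearMap.exists_retraction_of_range_eq_ker hiY hexY (n₀ := p x₁) (by rw [hc3, hπx₁])
  refine ⟨sX, sY, hsX, hsY, fun x => hiY ?_, fun x => hiY ?_⟩
  · rw [← hc1, hiX_sX, hiY_sY, map_sub, map_smul, hc3]
  · rw [← hc2, hiX_sX, hiY_sY, map_sub, map_smul, hqx₁, hc4, smul_zero, zero_smul, sub_zero]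

/-- If `V = C^♯`, every extension of Kronecker modules
`0 → (C,V,pr₁,pr₂) → (X,Y,p,q) → Z₁ → 0` splits, where `Z₁` has one-dimensional
`X`- and `Y`-spaces with `p` an isomorphism and `q = 0`. The extension is given by
injections `iX, iY`, surjections `πX, πY`, exactness, and commutation with the
structure maps; a splitting is a retraction of Kronecker modules. -/
theorem ext_Z1_splits
    {V : Type*} [AddCommGroup V] [Module K V] (C : Submodule K (V × V))
    (hV : csharp C = Set.univ)
    {X Y : Type*} [AddCommGroup X] [Module K X] [AddCommGroup Y] [Module K Y]
    (p q : X →ₗ[K] Y)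
    (iX : ↥C →ₗ[K] X) (iY : V →ₗ[K] Y) (πX : X →ₗ[K] K) (πY : Y →ₗ[K] K)
    (hiX : Function.Injective iX) (hiY : Function.Injective iY)
    (hπX : Function.Surjective πX) (hπY : Function.Surjective πY)
    (hexX : LinearMap.range iX = LinearMap.ker πX)
    (hexY : LinearMap.range iY = LinearMap.ker πY)
    (hc1 : ∀ c : ↥C, p (iX c) = iY (c : V × V).1)
    (hc2 : ∀ c : ↥C, q (iX c) = iY (c : V × V).2)
    (hc3 : ∀ x : X, πY (p x) = πX x)
    (hc4 : ∀ x : X, πY (q x) = 0) :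
    ∃ (sX : X →ₗ[K] ↥C) (sY : Y →ₗ[K] V),
      (∀ c : ↥C, sX (iX c) = c) ∧ (∀ v : V, sY (iY v) = v) ∧
      (∀ x : X, ((sX x : V × V)).1 = sY (p x)) ∧
      (∀ x : X, ((sX x : V × V)).2 = sY (q x)) :=
  ext_Z1_splits_general C hV p q iX iY πX πY hiX hiY hπX hexX hexY hc1 hc2 hc3 hc4
end
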